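/- arXiv:math/0210151 — 2 statements merged into one kernel-verified Lean document; each statement's English description precedes it below -/
import Mathlib

section
/- For a nilpotent matrix N ∈ M_n(k), the A-lattice Λ = φ_N(E₁) satisfies E₁ ⊇ Λ ⊇ tⁿE₁, where A = k[[t]] and E₁ = Aⁿ ⊂ F^n. -/
/-- The standard lattice `E₁ = Aⁿ ⊂ Fⁿ`, `A = k[[t]]`, `F = k((t))`:
the `k[[t]]`-span of the standard basis vectors. -/
noncomputable def stdLattice (k : Type*) [Field k] (n : ℕ) :
    Submodule (PowerSeries k) (Fin n → LaurentSeries k) :=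
  Submodule.span (PowerSeries k)
    (Set.range fun i : Fin n => (Pi.single i 1 : Fin n → LaurentSeries k))


lemma mem_stdLattice_of_entries {k : Type*} [Field k] {n : ℕ}
    (v : Fin n → LaurentSeries k)
    (h : ∀ j, ∃ p : PowerSeries k, algebraMap (PowerSeries k) (LaurentSeries k) p = v j) :
    v ∈ stdLattice k n := by
  choose p hp using h
  have hv : v = ∑ j, p j • (Pi.single j 1 : Fin n → LaurentSeries k) := by
    funext j
    simp only [Finset.sum_apply, Pi.smul_apply]
    rw [Finset.sum_eq_single j]
    · rw [Pi.single_eq_same, ← hp j, Algebra.algebraMap_eq_smul_one]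
    · intro b _ hb; rw [Pi.single_eq_of_ne' hb]; exact smul_zero (A := LaurentSeries k) (p b)
    · intro hj; exact absurd (Finset.mem_univ j) hj
  rw [hv]
  exact Submodule.sum_mem _ fun j _ =>
    Submodule.smul_mem _ _ (Submodule.subset_span ⟨j, rfl⟩)

lemma single_eq_algX {k : Type*} [Field k] :
    (HahnSeries.single (1 : ℤ) (1 : k) : LaurentSeries k)
      = algebraMap (PowerSeries k) (LaurentSeries k) PowerSeries.X := by
  rw [LaurentSeries.coe_algebraMap, HahnSeries.ofPowerSeries_X]

lemma algk_factor {k : Type*} [Field k] (c : k) :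
    algebraMap k (LaurentSeries k) c
      = algebraMap (PowerSeries k) (LaurentSeries k) (PowerSeries.C c) := by
  have h1 : algebraMap (PowerSeries k) (LaurentSeries k) (PowerSeries.C c)
      = HahnSeries.ofPowerSeries ℤ k (PowerSeries.C c) :=
    congrFun LaurentSeries.coe_algebraMap _
  rw [h1]
  rw [HahnSeries.algebraMap_apply' (Γ := ℤ) (R := k) (x := c), PowerSeries.algebraMap_apply]
  simp

set_option maxHeartbeats 1000000 in
set_option synthInstance.maxHeartbeats 400000 in
lemma telescope {k : Type*} [Field k] {n : ℕ}
    (M : Matrix (Fin n) (Fin n) (LaurentSeries k)) (hM : M ^ n = 0)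
    (T : LaurentSeries k) :
    (∑ m ∈ Finset.range n, T ^ (n - 1 - m) • M ^ m) * (T • 1 - M) = T ^ n • 1 := by
  rw [Finset.sum_mul]
  have : ∀ m ∈ Finset.range n,
      (T ^ (n - 1 - m) • M ^ m) * (T • 1 - M)
        = T ^ (n - m) • M ^ m - T ^ (n - (m + 1)) • M ^ (m + 1) := by
    intro m hm
    have he : n - 1 - m + 1 = n - m := by
      have := Finset.mem_range.mp hm; omega
    have he2 : n - 1 - m = n - (m + 1) := by omega
    rw [mul_sub, Matrix.smul_mul (T ^ (n - 1 - m)) (M ^ m) (T • 1),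
      Matrix.smul_mul (T ^ (n - 1 - m)) (M ^ m) M,
      Matrix.mul_smul (M ^ m) T 1, mul_one, smul_smul (T ^ (n - 1 - m)) T (M ^ m),
      ← pow_succ, he, ← pow_succ, he2]
  rw [Finset.sum_congr rfl this, Finset.sum_range_sub' (fun m => T ^ (n - m) • M ^ m) n]
  simp [hM]

set_option maxHeartbeats 1000000 in
set_option synthInstance.maxHeartbeats 400000 in
/-- For a nilpotent `N ∈ M_n(k)`, the `A`-lattice `Λ = φ_N(E₁)` satisfies
`E₁ ⊇ Λ ⊇ tⁿ E₁`, where `φ_N = ∑_{m=0}^{n−1} t^{n−1−m} N^m`. -/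
theorem lattice_sandwich (k : Type*) [Field k] (n : ℕ) (hn : 0 < n)
    (N : Matrix (Fin n) (Fin n) k) (hN : IsNilpotent N) :
    (stdLattice k n).map
        ((Matrix.mulVecLin (∑ m ∈ Finset.range n,
          ((HahnSeries.single (1 : ℤ) (1 : k) : LaurentSeries k) ^ (n - 1 - m)) •
            (N ^ m).map (algebraMap k (LaurentSeries k)))).restrictScalars (PowerSeries k))
      ≤ stdLattice k n ∧
    (stdLattice k n).map
        ((((HahnSeries.single (1 : ℤ) (1 : k) : LaurentSeries k) ^ n) •
          (LinearMap.id : (Fin n → LaurentSeries k) →ₗ[LaurentSeries k]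
            (Fin n → LaurentSeries k))).restrictScalars (PowerSeries k))
      ≤ (stdLattice k n).map
        ((Matrix.mulVecLin (∑ m ∈ Finset.range n,
          ((HahnSeries.single (1 : ℤ) (1 : k) : LaurentSeries k) ^ (n - 1 - m)) •
            (N ^ m).map (algebraMap k (LaurentSeries k)))).restrictScalars (PowerSeries k)) := by
  
  set T : LaurentSeries k := HahnSeries.single (1 : ℤ) (1 : k) with hT
  set alg := algebraMap k (LaurentSeries k) with halg
  -- N ^ n = 0
  have hNn : N ^ n = 0 := by
    have h1 := Matrix.isNilpotent_charpoly_sub_pow_of_isNilpotent hN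
    have h2 : N.charpoly = Polynomial.X ^ n := by
      have := sub_eq_zero.mp h1.eq_zero
      simpa using this
    have h3 := Matrix.aeval_self_charpoly N
    rw [h2] at h3
    simpa using h3
  have hmap_pow : ∀ m : ℕ, (N ^ m).map alg = (N.map alg) ^ m := by
    intro m
    have := map_pow (RingHom.mapMatrix alg) N m
    simpa [RingHom.mapMatrix_apply] using this
  have hMn : (N.map alg) ^ n = 0 := by
    rw [← hmap_pow, hNn]
    simp [Matrix.map_zero]
  have hkey : (∑ m ∈ Finset.range n, T ^ (n - 1 - m) • (N ^ m).map alg)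
      * (T • 1 - N.map alg) = T ^ n • 1 := by
    have := telescope (N.map alg) hMn T
    rw [← this]
    congr 1
    exact Finset.sum_congr rfl fun m _ => by rw [hmap_pow]
  constructor
  · rw [stdLattice, Submodule.map_span, Submodule.span_le]
    rintro _ ⟨_, ⟨i, rfl⟩, rfl⟩
    apply mem_stdLattice_of_entries
    intro j
    refine ⟨∑ m ∈ Finset.range n,
      PowerSeries.X ^ (n - 1 - m) * PowerSeries.C ((N ^ m) j i), ?_⟩
    simp only [LinearMap.coe_restrictScalars, Matrix.mulVecLin_apply, Matrix.mulVec_single,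
      mul_one, Matrix.sum_apply, Matrix.smul_apply, Matrix.map_apply, smul_eq_mul,
      map_sum, map_mul, map_pow, hT, halg, single_eq_algX, algk_factor,
      LinearMap.sum_apply, Finset.sum_apply, Matrix.mulVecBilin_apply,
      MulOpposite.op_one, one_smul, Matrix.col_apply]
  · rw [stdLattice, Submodule.map_span, Submodule.span_le]
    rintro _ ⟨_, ⟨i, rfl⟩, rfl⟩
    rw [SetLike.mem_coe, Submodule.mem_map]
    refine ⟨(T • 1 - N.map alg).mulVec (Pi.single i 1), ?_, ?_⟩
    · apply mem_stdLattice_of_entries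
      intro j
      refine ⟨PowerSeries.X * PowerSeries.C ((1 : Matrix (Fin n) (Fin n) k) j i)
        - PowerSeries.C (N j i), ?_⟩
      simp only [Matrix.mulVec_single, mul_one, Matrix.sub_apply, Matrix.smul_apply,
        smul_eq_mul, Matrix.map_apply, map_sub, map_mul, single_eq_algX, algk_factor]
      congr 1
      rw [← single_eq_algX, ← algk_factor]
      rcases eq_or_ne j i with h | h <;> simp [Matrix.one_apply, h, hT, halg, HahnSeries.algebraMap_apply',
        PowerSeries.algebraMap_apply]
    · simp only [LinearMap.coe_restrictScalars, Matrix.mulVecLin_apply,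
        Matrix.mulVec_mulVec, hkey, LinearMap.smul_apply, LinearMap.id_apply]
      rw [Matrix.smul_mulVec (T ^ n) (1 : Matrix (Fin n) (Fin n) (LaurentSeries k))
        (Pi.single i 1), Matrix.one_mulVec]
end

section
/- For the affine permutation π_c ∈ W̃ associated to the component L_c of circular complexes (given by the explicit block formula sending blocks I,…,V to shifted blocks V', τ(III'), τ(II'), τ(IV'), τ²(I')), Shi's length formula gives ℓ(π_c) = ab, independent of c; in particular (a−c)² + c² + (a−c)(b−a) + 2c(a−c) + c(b−a) = ab for all 0 ≤ c ≤ a ≤ b. -/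
private lemma abs_fdiv_zero {n x : ℤ} (h0 : 0 ≤ x) (h1 : x < n) : |Int.fdiv x n| = 0 := by
  rw [Int.fdiv_eq_ediv_of_nonneg _ (by omega), Int.ediv_eq_zero_of_lt h0 h1, abs_zero]

private lemma abs_fdiv_one_pos {n x : ℤ} (h0 : n ≤ x) (h1 : x < 2 * n) (hn : 0 < n) :
    |Int.fdiv x n| = 1 := by
  rw [Int.fdiv_eq_ediv_of_nonneg _ hn.le]
  have hx : x = (x - n) + n * 1 := by ring
  rw [hx, Int.add_mul_ediv_left _ _ hn.ne', Int.ediv_eq_zero_of_lt (by omega) (by omega)]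
  norm_num

private lemma abs_fdiv_one_neg {n x : ℤ} (h0 : -n ≤ x) (h1 : x < 0) (hn : 0 < n) :
    |Int.fdiv x n| = 1 := by
  rw [Int.fdiv_eq_ediv_of_nonneg _ hn.le]
  have hx : x = (x + n) + n * (-1) := by ring
  rw [hx, Int.add_mul_ediv_left _ _ hn.ne', Int.ediv_eq_zero_of_lt (by omega) (by omega)]
  norm_num

private lemma sum_Ioc_split (f : ℤ → ℤ) {x y z : ℤ} (h1 : x ≤ y) (h2 : y ≤ z) :
    ∑ j ∈ Finset.Ioc x z, f j = (∑ j ∈ Finset.Ioc x y, f j) + ∑ j ∈ Finset.Ioc y z, f j := by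
  rw [← Finset.sum_union (Finset.disjoint_left.2 (fun t ht1 ht2 => by
    rw [Finset.mem_Ioc] at ht1 ht2; omega)), Finset.Ioc_union_Ioc_eq_Ioc h1 h2]

private lemma sum_Ioc_const (f : ℤ → ℤ) {l r : ℤ} (k : ℤ) (h : l ≤ r)
    (hf : ∀ j, l < j → j ≤ r → f j = k) :
    ∑ j ∈ Finset.Ioc l r, f j = (r - l) * k := by
  have e : ∑ j ∈ Finset.Ioc l r, f j = ∑ _j ∈ Finset.Ioc l r, k :=
    Finset.sum_congr rfl (fun j hj => by rw [Finset.mem_Ioc] at hj; exact hf j hj.1 hj.2)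
  rw [e, Finset.sum_const, nsmul_eq_mul, Int.card_Ioc, Int.toNat_of_nonneg (by omega)]

/-- For the affine permutation `π_c` associated to the component `L_c` of circular
complexes (given by the explicit block formula: on `[1, n]` with `n = a + b`, blocks
I = [1,c], II = [c+1,a], III = [a+1,2a−c], IV = [2a−c+1,a+b−c], V = [a+b−c+1,a+b] are sent
to the shifted blocks V′, τ(III′), τ(II′), τ(IV′), τ²(I′) respectively, which gives the
piecewise formulas below), Shi's length formula yields `ℓ(π_c) = ab`, independent of `c`;
in particular `(a−c)² + c² + (a−c)(b−a) + 2c(a−c) + c(b−a) = ab`. -/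
theorem circular_complex_permutation_length (a b c : ℤ)
    (ha : 0 < a) (hab : a ≤ b) (hc0 : 0 ≤ c) (hca : c ≤ a)
    (π : ℤ → ℤ)
    (hper : ∀ i : ℤ, π (i + (a + b)) = π i + (a + b))
    (h1 : ∀ i : ℤ, 1 ≤ i → i ≤ c → π i = a + i)
    (h2 : ∀ i : ℤ, c + 1 ≤ i → i ≤ a → π i = a + 2 * b + i)
    (h3 : ∀ i : ℤ, a + 1 ≤ i → i ≤ 2 * a - c → π i = b + i)
    (h4 : ∀ i : ℤ, 2 * a - c + 1 ≤ i → i ≤ a + b - c → π i = b + 2 * c + i)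
    (h5 : ∀ i : ℤ, a + b - c + 1 ≤ i → i ≤ a + b → π i = 2 * a + b + i) :
    (∑ i ∈ Finset.Icc (1 : ℤ) (a + b), ∑ j ∈ Finset.Icc (i + 1) (a + b),
        |Int.fdiv (π j - π i) (a + b)|) = a * b ∧
    (a - c) ^ 2 + c ^ 2 + (a - c) * (b - a) + 2 * c * (a - c) + c * (b - a) = a * b := by
  have hn : 0 < a + b := by omega
  constructor
  · have hIcc : ∀ i : ℤ, Finset.Icc (i + 1) (a + b) = Finset.Ioc i (a + b) := by
      intro i; ext x; simp [Finset.mem_Icc, Finset.mem_Ioc]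
    simp only [hIcc]
    have key : ∀ i, 0 < i → i ≤ a + b →
        (∑ j ∈ Finset.Ioc i (a + b), |Int.fdiv (π j - π i) (a + b)|) =
        if i ≤ c then b else if i ≤ a then b - c else if i ≤ 2 * a - c then c else 0 := by
      intro i hi1 hi2
      by_cases hbI : i ≤ c
      · -- block I
        rw [if_pos hbI]
        have ei : π i = a + i := h1 i (by omega) hbI
        rw [sum_Ioc_split _ (show i ≤ c by omega) (show c ≤ a + b by omega),
            sum_Ioc_split _ (show c ≤ a by omega) (show a ≤ a + b by omega),
            sum_Ioc_split _ (show a ≤ 2 * a - c by omega) (show 2 * a - c ≤ a + b by omega),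
            sum_Ioc_split _ (show 2 * a - c ≤ a + b - c by omega)
              (show a + b - c ≤ a + b by omega)]
        rw [sum_Ioc_const _ 0 (by omega) (fun j hj1 hj2 => by
              rw [h1 j (by omega) (by omega), ei]; exact abs_fdiv_zero (by omega) (by omega)),
            sum_Ioc_const _ 1 (by omega) (fun j hj1 hj2 => by
              rw [h2 j (by omega) (by omega), ei]
              exact abs_fdiv_one_pos (by omega) (by omega) hn),
            sum_Ioc_const _ 0 (by omega) (fun j hj1 hj2 => by
              rw [h3 j (by omega) (by omega), ei]; exact abs_fdiv_zero (by omega) (by omega)),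
            sum_Ioc_const _ 1 (by omega) (fun j hj1 hj2 => by
              rw [h4 j (by omega) (by omega), ei]
              exact abs_fdiv_one_pos (by omega) (by omega) hn),
            sum_Ioc_const _ 1 (by omega) (fun j hj1 hj2 => by
              rw [h5 j (by omega) (by omega), ei]
              exact abs_fdiv_one_pos (by omega) (by omega) hn)]
        ring_nf
      · by_cases hbII : i ≤ a
        · -- block II
          rw [if_neg hbI, if_pos hbII]
          have ei : π i = a + 2 * b + i := h2 i (by omega) hbII
          rw [sum_Ioc_split _ (show i ≤ a by omega) (show a ≤ a + b by omega),
              sum_Ioc_split _ (show a ≤ 2 * a - c by omega) (show 2 * a - c ≤ a + b by omega),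
              sum_Ioc_split _ (show 2 * a - c ≤ a + b - c by omega)
                (show a + b - c ≤ a + b by omega)]
          rw [sum_Ioc_const _ 0 (by omega) (fun j hj1 hj2 => by
                rw [h2 j (by omega) (by omega), ei]; exact abs_fdiv_zero (by omega) (by omega)),
              sum_Ioc_const _ 1 (by omega) (fun j hj1 hj2 => by
                rw [h3 j (by omega) (by omega), ei]
                exact abs_fdiv_one_neg (by omega) (by omega) hn),
              sum_Ioc_const _ 1 (by omega) (fun j hj1 hj2 => by
                rw [h4 j (by omega) (by omega), ei]
                exact abs_fdiv_one_neg (by omega) (by omega) hn),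
              sum_Ioc_const _ 0 (by omega) (fun j hj1 hj2 => by
                rw [h5 j (by omega) (by omega), ei]; exact abs_fdiv_zero (by omega) (by omega))]
          ring_nf
        · by_cases hbIII : i ≤ 2 * a - c
          · -- block III
            rw [if_neg hbI, if_neg hbII, if_pos hbIII]
            have ei : π i = b + i := h3 i (by omega) hbIII
            rw [sum_Ioc_split _ (show i ≤ 2 * a - c by omega)
                  (show 2 * a - c ≤ a + b by omega),
                sum_Ioc_split _ (show 2 * a - c ≤ a + b - c by omega)
                  (show a + b - c ≤ a + b by omega)]
            rw [sum_Ioc_const _ 0 (by omega) (fun j hj1 hj2 => by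
                  rw [h3 j (by omega) (by omega), ei]
                  exact abs_fdiv_zero (by omega) (by omega)),
                sum_Ioc_const _ 0 (by omega) (fun j hj1 hj2 => by
                  rw [h4 j (by omega) (by omega), ei]
                  exact abs_fdiv_zero (by omega) (by omega)),
                sum_Ioc_const _ 1 (by omega) (fun j hj1 hj2 => by
                  rw [h5 j (by omega) (by omega), ei]
                  exact abs_fdiv_one_pos (by omega) (by omega) hn)]
            ring_nf
          · by_cases hbIV : i ≤ a + b - c
            · -- block IV
              rw [if_neg hbI, if_neg hbII, if_neg hbIII]
              have ei : π i = b + 2 * c + i := h4 i (by omega) hbIV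
              rw [sum_Ioc_split _ (show i ≤ a + b - c by omega)
                    (show a + b - c ≤ a + b by omega)]
              rw [sum_Ioc_const _ 0 (by omega) (fun j hj1 hj2 => by
                    rw [h4 j (by omega) (by omega), ei]
                    exact abs_fdiv_zero (by omega) (by omega)),
                  sum_Ioc_const _ 0 (by omega) (fun j hj1 hj2 => by
                    rw [h5 j (by omega) (by omega), ei]
                    exact abs_fdiv_zero (by omega) (by omega))]
              ring_nf
            · -- block V
              rw [if_neg hbI, if_neg hbII, if_neg hbIII]
              have ei : π i = 2 * a + b + i := h5 i (by omega) (by omega)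
              rw [sum_Ioc_const _ 0 (by omega) (fun j hj1 hj2 => by
                    rw [h5 j (by omega) (by omega), ei]
                    exact abs_fdiv_zero (by omega) (by omega))]
              ring_nf
    have hIcc1 : Finset.Icc (1 : ℤ) (a + b) = Finset.Ioc 0 (a + b) := by
      ext x; simp [Finset.mem_Icc, Finset.mem_Ioc]; omega
    rw [hIcc1]
    have etot : (∑ i ∈ Finset.Ioc (0:ℤ) (a + b),
          ∑ j ∈ Finset.Ioc i (a + b), |Int.fdiv (π j - π i) (a + b)|) =
        ∑ i ∈ Finset.Ioc (0:ℤ) (a + b),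
          (if i ≤ c then b else if i ≤ a then b - c else if i ≤ 2 * a - c then c else 0) :=
      Finset.sum_congr rfl (fun i hi => by rw [Finset.mem_Ioc] at hi; exact key i hi.1 hi.2)
    rw [etot]
    rw [sum_Ioc_split _ (show (0:ℤ) ≤ c by omega) (show c ≤ a + b by omega),
        sum_Ioc_split _ (show c ≤ a by omega) (show a ≤ a + b by omega),
        sum_Ioc_split _ (show a ≤ 2 * a - c by omega) (show 2 * a - c ≤ a + b by omega)]
    rw [sum_Ioc_const _ b (by omega) (fun i hi1 hi2 => by rw [if_pos (by omega)]),
        sum_Ioc_const _ (b - c) (by omega) (fun i hi1 hi2 => by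
          rw [if_neg (by omega), if_pos (by omega)]),
        sum_Ioc_const _ c (by omega) (fun i hi1 hi2 => by
          rw [if_neg (by omega), if_neg (by omega), if_pos (by omega)]),
        sum_Ioc_const _ 0 (by omega) (fun i hi1 hi2 => by
          rw [if_neg (by omega), if_neg (by omega), if_neg (by omega)])]
    ring
  · ring
end
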